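/- arXiv:1402.6485 — 3 statements merged into one kernel-verified Lean document; each statement's English description precedes it below -/
import Mathlib

section
/- Let F be a CNF formula whose clauses and variables admit an interval ordering, i.e., a linear order < on cla(F) ∪ var(F) such that for every variable x occurring in clause C: if x < C then every variable y with x < y < C occurs in C, and if C < x then x occurs in every clause D with C < D < x. Then the incidence graph I(F) has no induced cycle of length at least 6. -/
/-- A clause is a finite set of literals; a literal is a variable paired with a polarity. -/
def occursIn {V : Type*} (x : V) (C : Finset (V × Bool)) : Prop := ∃ b, (x, b) ∈ C

/-- An assignment `τ` satisfies the clause `C` restricted to the variable set `X`. -/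
def satisfiesOn {V : Type*} (τ : V → Bool) (C : Finset (V × Bool)) (X : Set V) : Prop :=
  ∃ l ∈ C, l.1 ∈ X ∧ τ l.1 = l.2

/-- The set of (indices of) clauses of the subformula `F_{D,X}` satisfied by `τ`. -/
def satA {V ι : Type*} (F : ι → Finset (V × Bool)) (τ : V → Bool) (D : Set ι) (X : Set V) :
    Set ι := {i | i ∈ D ∧ satisfiesOn τ (F i) X}

/-- Precisely satisfiable clause-sets of the subformula `F_{D,X}`. -/
def PSA {V ι : Type*} (F : ι → Finset (V × Bool)) (D : Set ι) (X : Set V) : Set (Set ι) :=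
  {s | ∃ τ : V → Bool, satA F τ D X = s}

/-- Clauses of `F` satisfied by the complete assignment `τ`. -/
def satF {V ι : Type*} (F : ι → Finset (V × Bool)) (τ : V → Bool) : Set ι :=
  satA F τ Set.univ Set.univ

/-- The family of precisely satisfiable clause-sets of `F`. -/
def PS {V ι : Type*} (F : ι → Finset (V × Bool)) : Set (Set ι) := PSA F Set.univ Set.univ

/-- The incidence graph of a CNF formula. -/
def incidence {V ι : Type*} (F : ι → Finset (V × Bool)) : SimpleGraph (ι ⊕ V) where
  Adj a b := (∃ i x, a = Sum.inl i ∧ b = Sum.inr x ∧ occursIn x (F i)) ∨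
             (∃ i x, b = Sum.inl i ∧ a = Sum.inr x ∧ occursIn x (F i))
  symm := by
    constructor
    rintro a b (⟨i, x, h1, h2, h3⟩ | ⟨i, x, h1, h2, h3⟩)
    · exact Or.inr ⟨i, x, h1, h2, h3⟩
    · exact Or.inl ⟨i, x, h1, h2, h3⟩
  loopless := by constructor; rintro a (⟨i, x, h1, h2, _⟩ | ⟨i, x, h1, h2, _⟩) <;> simp_all

/-- The bigraph bipartization `G[A, Ā]`: keep only edges with exactly one endpoint in `A`. -/
def bipartize {α : Type*} (G : SimpleGraph α) (A : Set α) : SimpleGraph α where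
  Adj a b := G.Adj a b ∧ ((a ∈ A ∧ b ∉ A) ∨ (b ∈ A ∧ a ∉ A))
  symm := by constructor; intro a b h; exact ⟨h.1.symm, h.2.symm⟩
  loopless := by constructor; intro a h; exact G.irrefl h.1

/-- `M` is an induced matching of the graph `G` (edges recorded as ordered pairs). -/
def IsIM {α : Type*} (G : SimpleGraph α) (M : Finset (α × α)) : Prop :=
  (∀ p ∈ M, G.Adj p.1 p.2) ∧
  ∀ p ∈ M, ∀ q ∈ M, p ≠ q →
    p.1 ≠ q.1 ∧ p.1 ≠ q.2 ∧ p.2 ≠ q.1 ∧ p.2 ≠ q.2 ∧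
    ¬ G.Adj p.1 q.1 ∧ ¬ G.Adj p.1 q.2 ∧ ¬ G.Adj p.2 q.1 ∧ ¬ G.Adj p.2 q.2

/-- Rooted binary trees with leaves labelled by `α`. -/
inductive BTree (α : Type u) : Type u
  | leaf : α → BTree α
  | node : BTree α → BTree α → BTree α

namespace BTree

def leaves {α : Type*} : BTree α → List α
  | leaf a => [a]
  | node l r => l.leaves ++ r.leaves

/-- The cuts of a branch decomposition: for every node of the tree, the set of labels of
leaves below it. -/
def cuts {α : Type*} : BTree α → List (Set α)
  | leaf a => [{a}]
  | node l r => {a | a ∈ l.leaves ∨ a ∈ r.leaves} :: (l.cuts ++ r.cuts)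

def map {α β : Type*} (f : α → β) : BTree α → BTree β
  | leaf a => leaf (f a)
  | node l r => node (l.map f) (r.map f)

end BTree

/-- `T` is a branch decomposition of the whole type `α`: its leaves are in bijection with `α`. -/
def IsBD {α : Type*} (T : BTree α) : Prop := T.leaves.Nodup ∧ ∀ a : α, a ∈ T.leaves

/-- The `ps`-value of a cut `S ⊆ cla(F) ⊕ var(F)` of the formula `F`. -/
noncomputable def psVal {V ι : Type*} (F : ι → Finset (V × Bool)) (S : Set (ι ⊕ V)) : ℕ :=
  max (PSA F {i | Sum.inl i ∉ S} {x | Sum.inr x ∈ S}).ncard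
      (PSA F {i | Sum.inl i ∈ S} {x | Sum.inr x ∉ S}).ncard

/-- The `ps`-width of the formula `F`. -/
noncomputable def psw {V ι : Type*} (F : ι → Finset (V × Bool)) : ℕ :=
  sInf {k | ∃ T : BTree (ι ⊕ V), IsBD T ∧ ∀ S ∈ T.cuts, psVal F S ≤ k}

/-- The MIM-width of a graph. -/
noncomputable def mimw {α : Type*} (G : SimpleGraph α) : ℕ :=
  sInf {k | ∃ T : BTree α, IsBD T ∧
    ∀ S ∈ T.cuts, ∀ M : Finset (α × α), IsIM (bipartize G S) M → M.card ≤ k}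

/-!
Take a vertex `u` of an induced cycle that comes first in the ordering, with cycle neighbours
`a < b`, and let `w` be the other neighbour of `a`. The interval property says: if two vertices
`q < r` have a common neighbour, then every neighbour `s > r` of `q` is also a neighbour of `r`.
If `w < b`, apply it to `u < w < b` (common neighbour `a`); if `b < w`, to `a < b < w` (common
neighbour `u`). Either way `w` and `b` are adjacent, which is a chord once the cycle has length at
least 5.
-/

theorem ZMod.natCast_ne_zero_of_lt {n k : ℕ} (hk : 0 < k) (hkn : k < n) : (k : ZMod n) ≠ 0 := by
  rw [Ne, ZMod.natCast_eq_zero_iff]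
  exact Nat.not_dvd_of_pos_of_lt hk hkn

def IsIntervalOrdering {V ι β : Type*} [LT β] (F : ι → Finset (V × Bool)) (ord : ι ⊕ V → β) :
    Prop :=
  (∀ (x : V) (i : ι), occursIn x (F i) → ord (Sum.inr x) < ord (Sum.inl i) →
    ∀ y : V, ord (Sum.inr x) < ord (Sum.inr y) → ord (Sum.inr y) < ord (Sum.inl i) →
      occursIn y (F i)) ∧
  (∀ (x : V) (i : ι), occursIn x (F i) → ord (Sum.inl i) < ord (Sum.inr x) →
    ∀ j : ι, ord (Sum.inl i) < ord (Sum.inl j) → ord (Sum.inl j) < ord (Sum.inr x) →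
      occursIn x (F j))

namespace SimpleGraph

variable {α β : Type*} [LinearOrder β] {G : SimpleGraph α} {f : α → β}

def AdjInterpolates (G : SimpleGraph α) (f : α → β) : Prop :=
  ∀ p q r s, G.Adj p q → G.Adj p r → G.Adj q s → f q < f r → f r < f s → G.Adj r s

structure IsInducedCycle (G : SimpleGraph α) {n : ℕ} (c : ZMod n → α) : Prop where
  injective : Function.Injective c
  adj : ∀ m : ZMod n, G.Adj (c m) (c (m + 1))
  not_adj : ∀ m m' : ZMod n, m' ≠ m → m' ≠ m + 1 → m ≠ m' + 1 → ¬ G.Adj (c m) (c m')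

namespace IsInducedCycle

variable {n : ℕ} {c : ZMod n → α}

theorem adj_of_add_one_eq (hc : G.IsInducedCycle c) {k l : ZMod n} (h : k + 1 = l) :
    G.Adj (c k) (c l) :=
  h ▸ hc.adj k

theorem comp_add_right (hc : G.IsInducedCycle c) (m : ZMod n) :
    G.IsInducedCycle (fun k => c (k + m)) where
  injective := hc.injective.comp (add_left_injective m)
  adj k := hc.adj_of_add_one_eq (add_right_comm k 1 m).symm
  not_adj k k' h₁ h₂ h₃ := hc.not_adj (k + m) (k' + m)
    (by simpa using h₁) (by rwa [add_right_comm, Ne, add_left_inj])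
    (by rwa [add_right_comm, Ne, add_left_inj])

theorem comp_neg (hc : G.IsInducedCycle c) : G.IsInducedCycle (fun k => c (-k)) where
  injective := hc.injective.comp neg_injective
  adj k := (hc.adj_of_add_one_eq (k := -(k + 1)) (by ring)).symm
  not_adj k k' h₁ h₂ h₃ := hc.not_adj (-k) (-k') (by simpa using h₁)
    (fun h => h₃ (by linear_combination h)) (fun h => h₂ (by linear_combination h))

end IsInducedCycle

theorem AdjInterpolates.adj_of_lt (hG : G.AdjInterpolates f) {w a u b : α} (hwa : G.Adj w a)
    (hau : G.Adj a u) (hub : G.Adj u b) (huw : f u < f w) (hab : f a < f b) (hwb : f w ≠ f b) :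
    G.Adj w b := by
  rcases hwb.lt_or_gt with hwb | hbw
  · exact hG a u w b hau hwa.symm hub huw hwb
  · exact (hG u a b w hau.symm hub hwa.symm hab hbw).symm

theorem AdjInterpolates.lt_of_isInducedCycle (hG : G.AdjInterpolates f) (hf : f.Injective)
    {n : ℕ} (hn : 5 ≤ n) {c : ZMod n → α} (hc : G.IsInducedCycle c)
    (hmin : ∀ k, f (c 0) ≤ f (c k)) : f (c 1) < f (c (-1)) := by
  have h2 : (2 : ZMod n) ≠ 0 := by
    exact_mod_cast ZMod.natCast_ne_zero_of_lt (k := 2) (by omega) (by omega)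
  have h3 : (3 : ZMod n) ≠ 0 := by
    exact_mod_cast ZMod.natCast_ne_zero_of_lt (k := 3) (by omega) (by omega)
  have h4 : (4 : ZMod n) ≠ 0 := by
    exact_mod_cast ZMod.natCast_ne_zero_of_lt (k := 4) (by omega) (by omega)
  have hne {k l : ZMod n} (h : k ≠ l) : f (c k) ≠ f (c l) := fun e => h (hc.injective (hf e))
  refine (hne fun h => h2 (by linear_combination h)).lt_or_gt.resolve_right fun hlt => ?_
  refine hc.not_adj (-2) 1 (fun h => h3 (by linear_combination h))
    (fun h => h2 (by linear_combination h)) (fun h => h4 (by linear_combination -h)) ?_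
  have hwa : G.Adj (c (-2)) (c (-1)) := hc.adj_of_add_one_eq (by ring)
  have hau : G.Adj (c (-1)) (c 0) := hc.adj_of_add_one_eq (by ring)
  have hub : G.Adj (c 0) (c 1) := hc.adj_of_add_one_eq (by ring)
  exact hG.adj_of_lt hwa hau hub ((hmin _).lt_of_ne (hne fun h => h2 (by linear_combination h)))
    hlt (hne fun h => h3 (by linear_combination -h))

theorem AdjInterpolates.not_isInducedCycle (hG : G.AdjInterpolates f) (hf : f.Injective)
    {n : ℕ} (hn : 5 ≤ n) (c : ZMod n → α) : ¬ G.IsInducedCycle c := by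
  intro hc
  have : NeZero n := ⟨by omega⟩
  -- Rotate a minimal vertex to position `0`; the cycle and its reversal then force opposite
  -- orders on its two neighbours.
  obtain ⟨m, hm⟩ := Finite.exists_min (f ∘ c)
  have hc' := hc.comp_add_right m
  have hmin : ∀ k, f (c (0 + m)) ≤ f (c (k + m)) := fun k => by simpa using hm (k + m)
  have hlt := hG.lt_of_isInducedCycle hf hn hc' hmin
  have hlt' := hG.lt_of_isInducedCycle hf hn hc'.comp_neg (by simpa using fun k => hmin (-k))
  simp only [neg_neg] at hlt'
  exact lt_asymm hlt hlt'

end SimpleGraph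

section Incidence

variable {V ι : Type*} {F : ι → Finset (V × Bool)}

@[simp]
theorem incidence_adj_inl_inr {i : ι} {x : V} :
    (incidence F).Adj (Sum.inl i) (Sum.inr x) ↔ occursIn x (F i) := by
  simp [incidence]

@[simp]
theorem incidence_adj_inr_inl {i : ι} {x : V} :
    (incidence F).Adj (Sum.inr x) (Sum.inl i) ↔ occursIn x (F i) := by
  simp [incidence]

@[simp]
theorem incidence_not_adj_inl_inl {i j : ι} : ¬ (incidence F).Adj (Sum.inl i) (Sum.inl j) := by
  simp [incidence]

@[simp]
theorem incidence_not_adj_inr_inr {x y : V} : ¬ (incidence F).Adj (Sum.inr x) (Sum.inr y) := by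
  simp [incidence]

theorem IsIntervalOrdering.adjInterpolates {β : Type*} [LinearOrder β] {ord : ι ⊕ V → β}
    (h : IsIntervalOrdering F ord) : (incidence F).AdjInterpolates ord := by
  rintro (i | x) (j | y) (k | z) (l | w) hpq hpr hqs hqr hrs <;>
    simp only [incidence_adj_inl_inr, incidence_adj_inr_inl, incidence_not_adj_inl_inl,
      incidence_not_adj_inr_inr] at hpq hpr hqs ⊢
  · exact h.1 y l hqs (hqr.trans hrs) z hqr hrs
  · exact h.2 w j hqs (hqr.trans hrs) k hqr hrs

end Incidence

/-- if `F` has an interval ordering then `I(F)` has no induced cycle of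
length at least 6. -/
theorem stmt13 {V ι : Type*} (F : ι → Finset (V × Bool)) (ord : ι ⊕ V → ℕ)
    (hinj : Function.Injective ord)
    (h1 : ∀ (x : V) (i : ι), occursIn x (F i) → ord (Sum.inr x) < ord (Sum.inl i) →
      ∀ y : V, ord (Sum.inr x) < ord (Sum.inr y) → ord (Sum.inr y) < ord (Sum.inl i) →
        occursIn y (F i))
    (h2 : ∀ (x : V) (i : ι), occursIn x (F i) → ord (Sum.inl i) < ord (Sum.inr x) →
      ∀ j : ι, ord (Sum.inl i) < ord (Sum.inl j) → ord (Sum.inl j) < ord (Sum.inr x) →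
        occursIn x (F j)) :
    ¬ ∃ (n : ℕ) (_ : 6 ≤ n) (c : ZMod n → ι ⊕ V), Function.Injective c ∧
      (∀ m : ZMod n, (incidence F).Adj (c m) (c (m + 1))) ∧
      (∀ m m' : ZMod n, m' ≠ m → m' ≠ m + 1 → m ≠ m' + 1 →
        ¬ (incidence F).Adj (c m) (c m')) := by
  rintro ⟨n, hn, c, hinjc, hadj, hind⟩
  exact IsIntervalOrdering.adjInterpolates ⟨h1, h2⟩ |>.not_isInducedCycle hinj (by omega) c
    ⟨hinjc, hadj, hind⟩
end

section
/- Every interval graph G admits a linear branch decomposition of MIM-width at most 1; i.e., ordering the vertices by left endpoints of their intervals, every prefix cut (P, V(G)\P) has maximum induced matching size at most 1 in the bipartite cut graph G[P, V(G)\P]. -/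
section IntervalGraph

variable {α β : Type*} [LinearOrder β] {l r : α → β} {G : SimpleGraph α}

theorem left_lt_of_mem_of_notMem {P : Set α} (hP : ∀ a b, l a ≤ l b → b ∈ P → a ∈ P)
    {a b : α} (ha : a ∈ P) (hb : b ∉ P) : l a < l b :=
  lt_of_not_ge fun h => hb (hP b a h ha)

theorem left_le_right_of_adj (hAdj : ∀ a b, G.Adj a b ↔ a ≠ b ∧ l a ≤ r b ∧ l b ≤ r a)
    {a b : α} (h : G.Adj a b) : l b ≤ r a :=
  ((hAdj a b).mp h).2.2

theorem right_lt_left_of_not_adj (hlr : ∀ a, l a ≤ r a)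
    (hAdj : ∀ a b, G.Adj a b ↔ a ≠ b ∧ l a ≤ r b ∧ l b ≤ r a)
    {a b : α} (hne : a ≠ b) (hlt : l a < l b) (h : ¬ G.Adj a b) : r a < l b := by
  by_contra! hle
  exact h ((hAdj a b).mpr ⟨hne, hlt.le.trans (hlr b), hle⟩)

end IntervalGraph

/-- ordering an interval graph by left endpoints, every prefix cut has maximum
induced matching size at most 1. -/
theorem stmt17 {α : Type*} (G : SimpleGraph α) (l r : α → ℝ)
    (hlr : ∀ a, l a ≤ r a)
    (hAdj : ∀ a b, G.Adj a b ↔ a ≠ b ∧ l a ≤ r b ∧ l b ≤ r a)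
    (P : Set α) (hP : ∀ a b, l a ≤ l b → b ∈ P → a ∈ P) :
    ¬ ∃ a1 b1 a2 b2 : α, a1 ∈ P ∧ a2 ∈ P ∧ b1 ∉ P ∧ b2 ∉ P ∧
      G.Adj a1 b1 ∧ G.Adj a2 b2 ∧ ¬ G.Adj a1 b2 ∧ ¬ G.Adj a2 b1 := by
  rintro ⟨a1, b1, a2, b2, ha1, ha2, hb1, hb2, h11, h22, h12, h21⟩
  have hne : ∀ {a b}, a ∈ P → b ∉ P → a ≠ b := fun ha hb hab => hb (hab ▸ ha)
  have end_before (a b) (ha : a ∈ P) (hb : b ∉ P) (h : ¬ G.Adj a b) : r a < l b :=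
    right_lt_left_of_not_adj hlr hAdj (hne ha hb) (left_lt_of_mem_of_notMem hP ha hb) h
  exact lt_irrefl (r a1) <| calc
    r a1 < l b2 := end_before a1 b2 ha1 hb2 h12
    _ ≤ r a2 := left_le_right_of_adj hAdj h22
    _ < l b1 := end_before a2 b1 ha2 hb1 h21
    _ ≤ r a1 := left_le_right_of_adj hAdj h11
end

section
/- Every circular arc graph G admits a linear branch decomposition of MIM-width at most 2: there is a linear order of V(G) (by a starting endpoint of each arc, beginning at a fixed point on the circle) such that for every prefix P, the bipartite cut graph G[P, V(G)\P] has no induced matching of size 3. -/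
/-!
Represent the circle as `ℝ / ℤ`, with every arc starting at a point of `[0, 1)`. Two arcs meet
iff one of them contains the starting point of the other, so every cut edge `ab` (with `a` before
the cut, `b` after it) is *forward* (the arc of `a` contains the start of `b`) or *backward* (the
arc of `b` contains the start of `a`). Two forward edges `a₁b₁`, `a₂b₂` cannot both be edges of an
induced matching: if `b₁` starts no later than `b₂`, the arc of `a₂` runs from before `b₁` to the
start of `b₂`, so it passes through the start of `b₁`. Symmetrically for two backward edges, the
arc of `b₂` wraps around from after the cut back to `a₂`, passing the start of any earlier `a₁`.
Among three edges, two have the same kind.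
-/

/-- The arc of length `t` starting at `s` on the circle `ℝ / ℤ` contains the image of `x`. -/
def ArcCovers (s t x : ℝ) : Prop := ∃ n : ℤ, s ≤ x + n ∧ x + n ≤ s + t

namespace ArcCovers

variable {s t x y s₁ t₁ s₂ t₂ : ℝ}

theorem start (ht : 0 ≤ t) : ArcCovers s t s := ⟨0, by simp, by simpa using ht⟩

theorem start_or_start_of_inter (h₁ : ArcCovers s₁ t₁ x) (h₂ : ArcCovers s₂ t₂ x) :
    ArcCovers s₁ t₁ s₂ ∨ ArcCovers s₂ t₂ s₁ := by
  obtain ⟨m₁, hx₁, hx₁'⟩ := h₁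
  obtain ⟨m₂, hx₂, hx₂'⟩ := h₂
  by_cases hc : s₁ ≤ s₂ + ((m₁ - m₂ : ℤ) : ℝ)
  · push_cast at hc
    exact Or.inl ⟨m₁ - m₂, by push_cast; linarith, by push_cast; linarith⟩
  · push_cast at hc
    exact Or.inr ⟨m₂ - m₁, by push_cast; linarith, by push_cast; linarith⟩

theorem of_le_of_le (hs : 0 ≤ s) (hx : x < 1) (hsy : s ≤ y) (hyx : y ≤ x)
    (h : ArcCovers s t x) : ArcCovers s t y := by
  obtain ⟨n, hn, hn'⟩ := h
  have hn₀ : (-1 : ℤ) < n := by exact_mod_cast (by linarith : (-1 : ℝ) < n)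
  have hn₀' : (0 : ℝ) ≤ n := by exact_mod_cast (by omega : (0 : ℤ) ≤ n)
  exact ⟨0, by simpa using hsy, by push_cast; linarith⟩

theorem of_le_of_lt (hy : 0 ≤ y) (hs : s < 1) (hyx : y ≤ x) (hxs : x < s)
    (h : ArcCovers s t x) : ArcCovers s t y := by
  obtain ⟨n, hn, hn'⟩ := h
  have hn₀ : (0 : ℤ) < n := by exact_mod_cast (by linarith : (0 : ℝ) < n)
  have hn₁ : (1 : ℝ) ≤ n := by exact_mod_cast (by omega : (1 : ℤ) ≤ n)
  exact ⟨n, by linarith, by linarith⟩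

variable {x₁ x₂ y₁ y₂ : ℝ}

theorem cross_of_forward (hx₁ : 0 ≤ x₁) (hx₂ : 0 ≤ x₂) (hy₁ : y₁ < 1) (hy₂ : y₂ < 1)
    (h₁₂ : x₁ < y₂) (h₂₁ : x₂ < y₁) (h₁ : ArcCovers x₁ t₁ y₁) (h₂ : ArcCovers x₂ t₂ y₂) :
    ArcCovers x₁ t₁ y₂ ∨ ArcCovers x₂ t₂ y₁ := by
  rcases le_total y₁ y₂ with h | h
  · exact Or.inr (h₂.of_le_of_le hx₂ hy₂ h₂₁.le h)
  · exact Or.inl (h₁.of_le_of_le hx₁ hy₁ h₁₂.le h)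

theorem cross_of_backward (hx₁ : 0 ≤ x₁) (hx₂ : 0 ≤ x₂) (hy₁ : y₁ < 1) (hy₂ : y₂ < 1)
    (h₁₁ : x₁ < y₁) (h₂₂ : x₂ < y₂) (h₁ : ArcCovers y₁ t₁ x₁) (h₂ : ArcCovers y₂ t₂ x₂) :
    ArcCovers y₁ t₁ x₂ ∨ ArcCovers y₂ t₂ x₁ := by
  rcases le_total x₁ x₂ with h | h
  · exact Or.inr (h₂.of_le_of_lt hx₁ hy₂ h h₂₂)
  · exact Or.inl (h₁.of_le_of_lt hx₂ hy₁ h h₁₁)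

end ArcCovers

section CircularArcGraph

variable {α : Type*} {G : SimpleGraph α} {s t : α → ℝ}

theorem adj_iff_arcCovers (ht : ∀ a, 0 ≤ t a)
    (hAdj : ∀ a b, G.Adj a b ↔ a ≠ b ∧ ∃ x : ℝ, ArcCovers (s a) (t a) x ∧ ArcCovers (s b) (t b) x)
    {a b : α} (hab : a ≠ b) :
    G.Adj a b ↔ ArcCovers (s a) (t a) (s b) ∨ ArcCovers (s b) (t b) (s a) := by
  rw [hAdj, and_iff_right hab]
  constructor
  · rintro ⟨x, ha, hb⟩
    exact ha.start_or_start_of_inter hb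
  · rintro (h | h)
    · exact ⟨s b, h, .start (ht b)⟩
    · exact ⟨s a, .start (ht a), h⟩

theorem forward_iff_not_forward_of_induced (hs : ∀ a, 0 ≤ s a ∧ s a < 1)
    (ht : ∀ a, 0 ≤ t a)
    (hAdj : ∀ a b, G.Adj a b ↔ a ≠ b ∧ ∃ x : ℝ, ArcCovers (s a) (t a) x ∧ ArcCovers (s b) (t b) x)
    {P : Set α} (hP : ∀ a b, s a ≤ s b → b ∈ P → a ∈ P) {a₁ a₂ b₁ b₂ : α}
    (ha₁ : a₁ ∈ P) (ha₂ : a₂ ∈ P) (hb₁ : b₁ ∉ P) (hb₂ : b₂ ∉ P)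
    (e₁ : G.Adj a₁ b₁) (e₂ : G.Adj a₂ b₂) (n₁₂ : ¬G.Adj a₁ b₂) (n₂₁ : ¬G.Adj a₂ b₁) :
    ArcCovers (s a₁) (t a₁) (s b₁) ↔ ¬ArcCovers (s a₂) (t a₂) (s b₂) := by
  have hlt : ∀ {a b}, a ∈ P → b ∉ P → s a < s b := fun ha hb =>
    lt_of_not_ge fun h => hb (hP _ _ h ha)
  have hadj : ∀ {a b}, a ∈ P → b ∉ P →
      (G.Adj a b ↔ ArcCovers (s a) (t a) (s b) ∨ ArcCovers (s b) (t b) (s a)) := fun ha hb =>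
    adj_iff_arcCovers ht hAdj fun h => hb (h ▸ ha)
  rw [hadj ha₁ hb₂, not_or] at n₁₂
  rw [hadj ha₂ hb₁, not_or] at n₂₁
  have not_both_forward := ArcCovers.cross_of_forward (t₁ := t a₁) (t₂ := t a₂) (hs a₁).1
    (hs a₂).1 (hs b₁).2 (hs b₂).2 (hlt ha₁ hb₂) (hlt ha₂ hb₁)
  have not_both_backward := ArcCovers.cross_of_backward (t₁ := t b₁) (t₂ := t b₂) (hs a₁).1
    (hs a₂).1 (hs b₁).2 (hs b₂).2 (hlt ha₁ hb₁) (hlt ha₂ hb₂)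
  rcases (hadj ha₁ hb₁).1 e₁ with fwd₁ | bwd₁ <;> rcases (hadj ha₂ hb₂).1 e₂ with fwd₂ | bwd₂ <;>
    tauto

end CircularArcGraph

/-- ordering a circular arc graph by starting points of the arcs, every prefix cut
has no induced matching of size 3. -/
theorem stmt18 {α : Type*} (G : SimpleGraph α) (s t : α → ℝ)
    (hs : ∀ a, 0 ≤ s a ∧ s a < 1) (ht : ∀ a, 0 ≤ t a)
    (hAdj : ∀ a b, G.Adj a b ↔ a ≠ b ∧ ∃ x : ℝ,
      (∃ m : ℤ, s a ≤ x + m ∧ x + m ≤ s a + t a) ∧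
      (∃ m : ℤ, s b ≤ x + m ∧ x + m ≤ s b + t b))
    (P : Set α) (hP : ∀ a b, s a ≤ s b → b ∈ P → a ∈ P) :
    ¬ ∃ a1 b1 a2 b2 a3 b3 : α,
      a1 ∈ P ∧ a2 ∈ P ∧ a3 ∈ P ∧ b1 ∉ P ∧ b2 ∉ P ∧ b3 ∉ P ∧
      G.Adj a1 b1 ∧ G.Adj a2 b2 ∧ G.Adj a3 b3 ∧
      ¬ G.Adj a1 b2 ∧ ¬ G.Adj a1 b3 ∧ ¬ G.Adj a2 b1 ∧ ¬ G.Adj a2 b3 ∧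
      ¬ G.Adj a3 b1 ∧ ¬ G.Adj a3 b2 := by
  rintro ⟨a1, b1, a2, b2, a3, b3, ha1, ha2, ha3, hb1, hb2, hb3,
    e1, e2, e3, n12, n13, n21, n23, n31, n32⟩
  have mixed := @forward_iff_not_forward_of_induced α G s t hs ht hAdj P hP
  have h12 := mixed ha1 ha2 hb1 hb2 e1 e2 n12 n21
  have h13 := mixed ha1 ha3 hb1 hb3 e1 e3 n13 n31
  have h23 := mixed ha2 ha3 hb2 hb3 e2 e3 n23 n32
  tauto
end
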